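/- Let X and Y be Polish spaces, let ε > 0, and let c : X × Y → ℝ be a measurable cost function that is bounded from below. Let μ̃ be a probability measure on X and let F be a class of measurable functions φ : X → [−∞, ∞) satisfying 0 < ∫_X exp(φ/ε) dμ̃ < ∞ for every φ ∈ F. Then for the (c,ε)-transformed class F^{(c,ε),μ̃} := { φ^{(c,ε),μ̃} : φ ∈ F } and every δ > 0 one has N(δ, F^{(c,ε),μ̃}, ‖·‖_∞) ≤ N(δ/2, F, ‖·‖_∞). -/

import Mathlib

open MeasureTheory ProbabilityTheory Real
open scoped ENNReal NNReal BigOperators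

noncomputable section

namespace EOTLCA

variable {X Y Z Ω : Type*}

/-- The set of couplings of `μ` and `ν`. -/
def couplings [MeasurableSpace X] [MeasurableSpace Y] (μ : Measure X) (ν : Measure Y) :
    Set (Measure (X × Y)) :=
  {pl | IsProbabilityMeasure pl ∧ pl.fst = μ ∧ pl.snd = ν}

open Classical in
/-- Kullback-Leibler divergence of `pl` with respect to `ρ`. -/
def KLdiv [MeasurableSpace Z] (pl ρ : Measure Z) : EReal :=
  if pl ≪ ρ then (((∫ z, Real.log (pl.rnDeriv ρ z).toReal ∂pl) : ℝ) : EReal) else ⊤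

/-- The entropic optimal transport cost with cost `c` and regularization parameter `ε`. -/
def EOT [MeasurableSpace X] [MeasurableSpace Y] (c : X → Y → ℝ) (ε : ℝ)
    (μ : Measure X) (ν : Measure Y) : EReal :=
  ⨅ pl ∈ couplings μ ν,
    (((∫ p, c p.1 p.2 ∂pl) : ℝ) : EReal) + (ε : EReal) * KLdiv pl (μ.prod ν)

/-- Entropic `(c,ε)`-transform of `φ : X → ℝ` with respect to the measure `ξ` on `X`;
the result is a function on `Y`. -/
def entTrans [MeasurableSpace X] (c : X → Y → ℝ) (ε : ℝ) (ξ : Measure X) (φ : X → ℝ) :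
    Y → ℝ :=
  fun y => -ε * Real.log (∫ x, Real.exp ((φ x - c x y) / ε) ∂ξ)

/-- The dual function class `F_{c,ε}`: functions `φ : X → ℝ` which arise as the entropic
`(c,ε)`-transform of some `ψ : Y → ℝ` with respect to some probability measure on `Y`,
with `‖φ‖_∞, ‖ψ‖_∞ ≤ 3/2`. -/
def Fclass [MeasurableSpace X] [MeasurableSpace Y] (c : X → Y → ℝ) (ε : ℝ) : Set (X → ℝ) :=
  {φ | ∃ ξ : Measure Y, IsProbabilityMeasure ξ ∧ ∃ ψ : Y → ℝ, Measurable ψ ∧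
      φ = entTrans (Function.swap c) ε ξ ψ ∧ (∀ x, |φ x| ≤ 3 / 2) ∧ (∀ y, |ψ y| ≤ 3 / 2)}

/-- Empirical measure of the first `n` values of the sequence `xs`. -/
def empMeas [MeasurableSpace Z] (n : ℕ) (xs : ℕ → Z) : Measure Z :=
  (n : ℝ≥0∞)⁻¹ • ∑ i ∈ Finset.range n, Measure.dirac (xs i)

/-- Uniform covering number of a class `F` of real functions, at scale `δ`, with respect to the
supremum norm over the set `S`. -/
def coverNumOn (δ : ℝ) (S : Set Z) (F : Set (Z → ℝ)) : ℝ≥0∞ :=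
  sInf ((fun T : Finset (Z → ℝ) => (T.card : ℝ≥0∞)) ''
    {T | ∀ f ∈ F, ∃ g ∈ T, ∀ z ∈ S, |f z - g z| ≤ δ})

/-- Uniform covering number of a class of real functions at scale `δ`. -/
def coverNum (δ : ℝ) (F : Set (Z → ℝ)) : ℝ≥0∞ := coverNumOn δ Set.univ F

/-- `xs` is an i.i.d. sample from `μ`, on the probability space `(Ω, P)`. -/
def IIDSamples [MeasurableSpace Z] [MeasurableSpace Ω] (P : Measure Ω) (μ : Measure Z)
    (xs : ℕ → Ω → Z) : Prop :=
  (∀ i, Measurable (xs i)) ∧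
    iIndepFun xs P ∧ ∀ i, P.map (xs i) = μ

open Classical in
/-- `exp(t/ε)` for an extended-real `t ∈ [-∞, ∞)`, with `exp(-∞/ε) = 0`. -/
def expScale (ε : ℝ) (t : EReal) : ℝ := if t = ⊥ then 0 else Real.exp (t.toReal / ε)

/-- Entropic `(c,ε)`-transform of a `[-∞,∞)`-valued function `φ : X → EReal` with respect to
the measure `ξ` on `X`; the result is a function on `Y`. -/
def entTransE [MeasurableSpace X] (c : X → Y → ℝ) (ε : ℝ) (ξ : Measure X) (φ : X → EReal) :
    Y → ℝ :=
  fun y => -ε * Real.log (∫ x, expScale ε (φ x - (c x y : EReal)) ∂ξ)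

/-- Uniform covering number for classes of `EReal`-valued functions. -/
def coverNumE (δ : ℝ) (F : Set (Z → EReal)) : ℝ≥0∞ :=
  sInf ((fun T : Finset (Z → EReal) => (T.card : ℝ≥0∞)) ''
    {T | ∀ f ∈ F, ∃ g ∈ T, ∀ z, max (f z - g z) (g z - f z) ≤ (δ : EReal)})

/-! For fixed `y`, the transform of `φ` is `-ε log ∫ exp (-c(·, y)/ε) exp (φ/ε) dμ̃`. If `φ` and
`ψ` both lie within `δ/2` of the same centre, then `exp (φ/ε)` and `exp (ψ/ε)` agree pointwise up
to the factor `exp (δ/ε)` (also where they vanish, at `φ = -∞`), hence so do the two integrals,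
and the transforms differ by at most `δ`. Replacing each centre of a `δ/2`-cover of `F` by the
transform of a member of `F` near it therefore gives a `δ`-cover of the transformed class. -/

lemma expScale_nonneg (ε : ℝ) (t : EReal) : 0 ≤ expScale ε t := by
  unfold expScale
  split
  · exact le_rfl
  · exact (Real.exp_pos _).le

lemma expScale_sub_coe (ε : ℝ) {a : EReal} (ha : a ≠ ⊤) (r : ℝ) :
    expScale ε (a - r) = Real.exp (-r / ε) * expScale ε a := by
  induction a using EReal.rec with
  | bot => simp [expScale]
  | coe x =>
    rw [← EReal.coe_sub]
    simp only [expScale, EReal.coe_ne_bot, if_false, EReal.toReal_coe, ← Real.exp_add]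
    ring_nf
  | top => exact absurd rfl ha

lemma expScale_le_exp_mul_expScale {ε : ℝ} (hε : 0 < ε) {a b : EReal} {r : ℝ} (hb : b ≠ ⊤)
    (h : a - b ≤ r) : expScale ε a ≤ Real.exp (r / ε) * expScale ε b := by
  induction a using EReal.rec with
  | bot => simpa [expScale] using mul_nonneg (Real.exp_pos _).le (expScale_nonneg ε b)
  | top =>
    induction b using EReal.rec with
    | bot => simp at h
    | coe y => simp at h
    | top => exact absurd rfl hb
  | coe x =>
    induction b using EReal.rec with
    | bot => simp at h
    | coe y =>
      have h' : x - y ≤ r := by exact_mod_cast h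
      simp only [expScale, EReal.coe_ne_bot, if_false, EReal.toReal_coe, ← Real.exp_add]
      gcongr
      rw [← add_div]
      gcongr
      linarith
    | top => exact absurd rfl hb

lemma ne_top_of_sub_le {a b : EReal} {r : ℝ} (ha : a ≠ ⊤) (h : b - a ≤ r) : b ≠ ⊤ := by
  rintro rfl
  induction a using EReal.rec with
  | bot => simp at h
  | coe x => simp at h
  | top => exact ha rfl

lemma expScale_le_of_near_common {ε : ℝ} (hε : 0 < ε) {a b g : EReal} {r : ℝ} (ha : a ≠ ⊤)
    (hag : max (a - g) (g - a) ≤ r) (hbg : max (b - g) (g - b) ≤ r) :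
    expScale ε a ≤ Real.exp ((r + r) / ε) * expScale ε b := by
  rw [max_le_iff] at hag hbg
  have hg : g ≠ ⊤ := ne_top_of_sub_le ha hag.2
  have hb : b ≠ ⊤ := ne_top_of_sub_le hg hbg.1
  calc expScale ε a ≤ Real.exp (r / ε) * expScale ε g := expScale_le_exp_mul_expScale hε hg hag.1
    _ ≤ Real.exp (r / ε) * (Real.exp (r / ε) * expScale ε b) := by
        gcongr
        exact expScale_le_exp_mul_expScale hε hb hbg.2
    _ = Real.exp ((r + r) / ε) * expScale ε b := by
        rw [add_div, Real.exp_add]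
        ring

lemma abs_log_sub_log_le {I J t : ℝ} (hI : 0 ≤ I) (hJ : 0 ≤ J) (ht : 0 ≤ t)
    (hIJ : I ≤ Real.exp t * J) (hJI : J ≤ Real.exp t * I) : |Real.log I - Real.log J| ≤ t := by
  rcases hI.eq_or_lt with rfl | hI
  · have : J = 0 := le_antisymm (by simpa using hJI) hJ
    simpa [this] using ht
  have hJ : 0 < J := pos_of_mul_pos_right (hI.trans_le hIJ) (Real.exp_pos t).le
  have hlog : ∀ {u v : ℝ}, 0 < u → 0 < v → u ≤ Real.exp t * v → Real.log u ≤ t + Real.log v :=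
    fun hu hv huv => by
      rw [← Real.log_exp t, ← Real.log_mul (Real.exp_ne_zero t) hv.ne']
      exact Real.log_le_log hu huv
  rw [abs_sub_le_iff]
  constructor
  · linarith [hlog hI hJ hIJ]
  · linarith [hlog hJ hI hJI]

section Transform

variable {X Y : Type*} [MeasurableSpace X] {ε : ℝ} {c : X → Y → ℝ} {μ : Measure X}

lemma entTransE_eq_log_integral {φ : X → EReal} (hφ : ∀ x, φ x ≠ ⊤) (y : Y) :
    entTransE c ε μ φ y =
      -ε * Real.log (∫ x, Real.exp (-c x y / ε) * expScale ε (φ x) ∂μ) := by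
  simp only [entTransE, expScale_sub_coe ε (hφ _)]

lemma integrable_exp_neg_cost_mul_expScale [MeasurableSpace Y] (hε : 0 < ε)
    (hc : Measurable (Function.uncurry c))
    {L : ℝ} (hL : ∀ x y, L ≤ c x y) {φ : X → EReal}
    (hφ : Integrable (fun x => expScale ε (φ x)) μ) (y : Y) :
    Integrable (fun x => Real.exp (-c x y / ε) * expScale ε (φ x)) μ := by
  have hcy : Measurable fun x => c x y := hc.comp (measurable_id.prodMk measurable_const)
  refine hφ.bdd_mul (c := Real.exp (-L / ε)) (hcy.neg.div_const ε).exp.aestronglyMeasurable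
    (Filter.Eventually.of_forall fun x => ?_)
  rw [Real.norm_eq_abs, abs_of_pos (Real.exp_pos _)]
  gcongr
  linarith [hL x y]

lemma abs_entTransE_sub_le [MeasurableSpace Y] (hε : 0 < ε)
    (hc : Measurable (Function.uncurry c)) {L : ℝ} (hL : ∀ x y, L ≤ c x y) {δ : ℝ} (hδ : 0 ≤ δ)
    {φ ψ : X → EReal}
    (hφt : ∀ x, φ x ≠ ⊤) (hψt : ∀ x, ψ x ≠ ⊤)
    (hφi : Integrable (fun x => expScale ε (φ x)) μ)
    (hψi : Integrable (fun x => expScale ε (ψ x)) μ)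
    (hφψ : ∀ x, expScale ε (φ x) ≤ Real.exp (δ / ε) * expScale ε (ψ x))
    (hψφ : ∀ x, expScale ε (ψ x) ≤ Real.exp (δ / ε) * expScale ε (φ x)) (y : Y) :
    |entTransE c ε μ φ y - entTransE c ε μ ψ y| ≤ δ := by
  have hcompare : ∀ {f g : X → EReal}, Integrable (fun x => expScale ε (g x)) μ →
      (∀ x, expScale ε (f x) ≤ Real.exp (δ / ε) * expScale ε (g x)) →
      ∫ x, Real.exp (-c x y / ε) * expScale ε (f x) ∂μ ≤
        Real.exp (δ / ε) * ∫ x, Real.exp (-c x y / ε) * expScale ε (g x) ∂μ := by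
    intro f g hg hfg
    rw [← integral_const_mul]
    refine integral_mono_of_nonneg (Filter.Eventually.of_forall fun x => by
      have := expScale_nonneg ε (f x); positivity)
      ((integrable_exp_neg_cost_mul_expScale hε hc hL hg y).const_mul _)
      (Filter.Eventually.of_forall fun x => ?_)
    dsimp only
    rw [mul_left_comm]
    gcongr
    exact hfg x
  have hlog := abs_log_sub_log_le
    (integral_nonneg fun x => mul_nonneg (Real.exp_pos _).le (expScale_nonneg ε (φ x)))
    (integral_nonneg fun x => mul_nonneg (Real.exp_pos _).le (expScale_nonneg ε (ψ x)))
    (div_nonneg hδ hε.le) (hcompare hψi hφψ) (hcompare hφi hψφ)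
  rw [entTransE_eq_log_integral hφt, entTransE_eq_log_integral hψt, ← mul_sub, abs_mul,
    abs_neg, abs_of_pos hε]
  calc ε * |_| ≤ ε * (δ / ε) := by gcongr
    _ = δ := mul_div_cancel₀ δ hε.ne'

end Transform

/-- The centres of an `r`-cover of `F` need not lie in `F`: each is replaced by the image of a
member of `F` within `r` of it. -/
lemma coverNum_image_le_coverNumE {X Y : Type*} {F : Set (X → EReal)} {Φ : (X → EReal) → Y → ℝ}
    {r δ : ℝ}
    (hΦ : ∀ φ ∈ F, ∀ ψ ∈ F, ∀ g : X → EReal, (∀ x, max (φ x - g x) (g x - φ x) ≤ (r : EReal)) →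
      (∀ x, max (ψ x - g x) (g x - ψ x) ≤ (r : EReal)) → ∀ y, |Φ φ y - Φ ψ y| ≤ δ) :
    coverNum δ (Φ '' F) ≤ coverNumE r F := by
  classical
  refine le_sInf ?_
  rintro _ ⟨T, hT, rfl⟩
  let NearF : (X → EReal) → Prop := fun g =>
    ∃ ψ ∈ F, ∀ x, max (ψ x - g x) (g x - ψ x) ≤ (r : EReal)
  let center : (X → EReal) → Y → ℝ := fun g =>
    if h : NearF g then Φ h.choose else 0
  refine sInf_le_of_le ⟨T.image center, ?_, rfl⟩ (Nat.cast_le.mpr Finset.card_image_le)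
  rintro _ ⟨φ, hφ, rfl⟩
  obtain ⟨g, hgT, hφg⟩ := hT φ hφ
  have hg : NearF g := ⟨φ, hφ, hφg⟩
  refine ⟨center g, Finset.mem_image_of_mem center hgT, fun y _ => ?_⟩
  simp only [center, dif_pos hg]
  exact hΦ φ hφ _ hg.choose_spec.1 g hφg hg.choose_spec.2 y

theorem statement2_general
    {X Y : Type*} [MeasurableSpace X] [MeasurableSpace Y]
    (ε : ℝ) (hε : 0 < ε) (c : X → Y → ℝ) (hc : Measurable (Function.uncurry c))
    (hclb : ∃ L : ℝ, ∀ x y, L ≤ c x y)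
    (μ' : Measure X)
    (F : Set (X → EReal))
    (hF : ∀ φ ∈ F, Measurable φ ∧ (∀ x, φ x ≠ ⊤) ∧
      Integrable (fun x => expScale ε (φ x)) μ' ∧ 0 < ∫ x, expScale ε (φ x) ∂μ')
    (δ : ℝ) (hδ : 0 < δ) :
    coverNum δ ((fun φ => entTransE c ε μ' φ) '' F) ≤ coverNumE (δ / 2) F := by
  obtain ⟨L, hL⟩ := hclb
  refine coverNum_image_le_coverNumE fun φ hφ ψ hψ g hφg hψg => ?_
  obtain ⟨-, hφt, hφi, -⟩ := hF φ hφ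
  obtain ⟨-, hψt, hψi, -⟩ := hF ψ hψ
  have hclose : ∀ {f h : X → EReal}, (∀ x, f x ≠ ⊤) →
      (∀ x, max (f x - g x) (g x - f x) ≤ ((δ / 2 : ℝ) : EReal)) →
      (∀ x, max (h x - g x) (g x - h x) ≤ ((δ / 2 : ℝ) : EReal)) →
      ∀ x, expScale ε (f x) ≤ Real.exp (δ / ε) * expScale ε (h x) := fun hf hfg hhg x => by
    simpa only [add_halves] using expScale_le_of_near_common hε (hf x) (hfg x) (hhg x)
  exact abs_entTransE_sub_le hε hc hL hδ.le hφt hψt hφi hψi (hclose hφt hφg hψg)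
    (hclose hψt hψg hφg)

/-- Lemma `lemma:entt_cov_num`: the entropic `(c,ε)`-transform does not
increase the uniform metric entropy by more than passing from scale `δ` to scale `δ/2`. -/
theorem statement2
    {X Y : Type*} [MeasurableSpace X] [TopologicalSpace X] [BorelSpace X] [PolishSpace X]
    [MeasurableSpace Y] [TopologicalSpace Y] [BorelSpace Y] [PolishSpace Y]
    (ε : ℝ) (hε : 0 < ε) (c : X → Y → ℝ) (hc : Measurable (Function.uncurry c))
    (hclb : ∃ L : ℝ, ∀ x y, L ≤ c x y)
    (μ' : Measure X) [IsProbabilityMeasure μ']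
    (F : Set (X → EReal))
    (hF : ∀ φ ∈ F, Measurable φ ∧ (∀ x, φ x ≠ ⊤) ∧
      Integrable (fun x => expScale ε (φ x)) μ' ∧ 0 < ∫ x, expScale ε (φ x) ∂μ')
    (δ : ℝ) (hδ : 0 < δ) :
    coverNum δ ((fun φ => entTransE c ε μ' φ) '' F) ≤ coverNumE (δ / 2) F :=
  statement2_general ε hε c hc hclb μ' F hF δ hδ

end EOTLCA
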